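/- Joint distribution of k parallel Bell measurements: let α be a finite type, k ∈ ℕ, and Ψ : α × (Fin k → Fin 2) → ℂ. Attach k fresh EPR pairs (r₁ᵢ, r₂ᵢ) and apply B† to each pair (qᵢ, r₁ᵢ); call the result Φ. Then for every tuple of outcomes m : Fin k → Fin 2 × Fin 2, the total probability of observing m on the k pairs (qᵢ, r₁ᵢ) equals 4^{−k}·∑|Ψ|². In particular, the k Bell measurement results are mutually independent and each outcome occurs with probability exactly 1/4, independent of Ψ. -/

import Mathlib

open Matrix Kronecker

noncomputable def Hgate : Matrix (Fin 2) (Fin 2) ℂ :=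
  ((1 / Real.sqrt 2 : ℝ) : ℂ) • !![1, 1; 1, -1]

/-- The CNOT gate: `CNOT(|a⟩⊗|b⟩) = |a⟩⊗|a⊕b⟩`. -/
def CNOT : Matrix (Fin 2 × Fin 2) (Fin 2 × Fin 2) ℂ :=
  fun p q => if p = (q.1, q.1 + q.2) then 1 else 0

/-- The Bell gate `B = CNOT * (H ⊗ I₂)`. -/
noncomputable def Bgate : Matrix (Fin 2 × Fin 2) (Fin 2 × Fin 2) ℂ :=
  CNOT * (Hgate ⊗ₖ (1 : Matrix (Fin 2) (Fin 2) ℂ))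

/-- `B†`, the conjugate transpose of the Bell gate. -/
noncomputable def Bdag : Matrix (Fin 2 × Fin 2) (Fin 2 × Fin 2) ℂ := Bgateᴴ

/-- The computational basis state `|a⟩` of one qubit. -/
def ket (a : Fin 2) : Fin 2 → ℂ := fun i => if i = a then 1 else 0

/-- The EPR state `B(|0⟩⊗|0⟩) = (|00⟩+|11⟩)/√2`. -/
noncomputable def EPR : Fin 2 × Fin 2 → ℂ :=
  Bgate.mulVec fun p => ket 0 p.1 * ket 0 p.2

/-- The state obtained from `Ψ ⊗ EPR^{⊗k}` (the `i`-th EPR pair occupying fresh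
qubits `r₁ᵢ, r₂ᵢ`) by applying `B†` to each pair `(qᵢ, r₁ᵢ)` and the identity
elsewhere.  Coordinates are `(a, q, r₁, r₂)`. -/
noncomputable def parallelTeleported {α : Type*} [Fintype α] (k : ℕ)
    (Ψ : α × (Fin k → Fin 2) → ℂ) :
    α × (Fin k → Fin 2) × (Fin k → Fin 2) × (Fin k → Fin 2) → ℂ :=
  fun x => ∑ q' : Fin k → Fin 2, ∑ r' : Fin k → Fin 2,
    (∏ i, Bdag (x.2.1 i, x.2.2.1 i) (q' i, r' i)) *
      (Ψ (x.1, q') * ∏ i, EPR (r' i, x.2.2.2 i))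


/-! Contracting `B†` on `(qᵢ, r₁ᵢ)` with the EPR pair `(r₁ᵢ, r₂ᵢ)` leaves, for fixed outcome
`(m₁, m₂)` and `r₂ᵢ = w`, only the term `qᵢ = w + m₂` with coefficient `H(w + m₂, m₁)/√2`, of
modulus `1/2`: this is the teleportation identity, qubitwise. So the post-measurement amplitude
is `Ψ` with its `q`-register translated by `m₂`, times a factor of modulus `2⁻ᵏ`, and summing
`|·|²` over `w` only reindexes the sum of `|Ψ|²`. -/

open Finset

lemma EPR_apply (x y : Fin 2) :
    EPR (x, y) = if x = y then (((Real.sqrt 2)⁻¹ : ℝ) : ℂ) else 0 := by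
  fin_cases x <;> fin_cases y <;>
    simp [EPR, Bgate, CNOT, Hgate, ket, mulVec, dotProduct, mul_apply,
      Fintype.sum_prod_type, Fin.sum_univ_two, Matrix.one_apply, Prod.ext_iff]

lemma Bdag_apply (a b q r : Fin 2) :
    Bdag (a, b) (q, r) = if r = q + b then Hgate q a else 0 := by
  fin_cases a <;> fin_cases b <;> fin_cases q <;> fin_cases r <;>
    simp [Bdag, Bgate, CNOT, Hgate, conjTranspose_apply, mul_apply,
      Fintype.sum_prod_type, Fin.sum_univ_two, Matrix.one_apply, Prod.ext_iff]

lemma norm_Hgate_apply (q a : Fin 2) : ‖Hgate q a‖ = (Real.sqrt 2)⁻¹ := by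
  fin_cases q <;> fin_cases a <;> simp [Hgate]

lemma sum_Bdag_mul_EPR (u v y z : Fin 2) :
    ∑ x, Bdag (u, v) (y, x) * EPR (x, z)
      = if y = z + v then Hgate y u * (((Real.sqrt 2)⁻¹ : ℝ) : ℂ) else 0 := by
  simp only [Bdag_apply, EPR_apply, Fin.sum_univ_two]
  fin_cases v <;> fin_cases y <;> fin_cases z <;> simp

lemma parallelTeleported_apply {α : Type*} [Fintype α] {k : ℕ} (Ψ : α × (Fin k → Fin 2) → ℂ)
    (a : α) (q r₁ w : Fin k → Fin 2) :
    parallelTeleported k Ψ (a, q, r₁, w)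
      = Ψ (a, w + r₁) * ∏ i, Hgate (w i + r₁ i) (q i) * (((Real.sqrt 2)⁻¹ : ℝ) : ℂ) := by
  calc parallelTeleported k Ψ (a, q, r₁, w)
      = ∑ q', Ψ (a, q') * ∏ i, ∑ x, Bdag (q i, r₁ i) (q' i, x) * EPR (x, w i) := by
        refine sum_congr rfl fun q' _ => ?_
        simp only [Fintype.prod_sum, mul_sum]
        exact sum_congr rfl fun r' _ => by rw [prod_mul_distrib]; ring
    _ = ∑ q', Ψ (a, q') * if q' = w + r₁ then
          ∏ i, Hgate (q' i) (q i) * (((Real.sqrt 2)⁻¹ : ℝ) : ℂ) else 0 := by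
        simp only [sum_Bdag_mul_EPR, Fintype.prod_ite_zero, ← Pi.add_apply w r₁, ← funext_iff]
    _ = _ := by simp

lemma norm_sq_parallelTeleported_apply {α : Type*} [Fintype α] {k : ℕ}
    (Ψ : α × (Fin k → Fin 2) → ℂ) (a : α) (q r₁ w : Fin k → Fin 2) :
    ‖parallelTeleported k Ψ (a, q, r₁, w)‖ ^ 2 = ((4 : ℝ) ^ k)⁻¹ * ‖Ψ (a, w + r₁)‖ ^ 2 := by
  have h_factor (i : Fin k) :
      ‖Hgate (w i + r₁ i) (q i) * (((Real.sqrt 2)⁻¹ : ℝ) : ℂ)‖ = 2⁻¹ := by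
    rw [norm_mul, norm_Hgate_apply, Complex.norm_real, Real.norm_of_nonneg (by positivity),
      ← mul_inv, Real.mul_self_sqrt zero_le_two]
  rw [parallelTeleported_apply, norm_mul, norm_prod, Fintype.prod_congr _ _ h_factor,
    prod_const, card_univ, Fintype.card_fin, mul_pow, ← pow_mul, mul_comm k, pow_mul, ← inv_pow]
  norm_num [mul_comm]

/-- Joint distribution of `k` parallel Bell measurements: every tuple of outcomes
`m : Fin k → Fin 2 × Fin 2` on the `k` pairs `(qᵢ, r₁ᵢ)` occurs with total
probability `4^{−k}·∑|Ψ|²`; in particular the `k` Bell measurement results are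
mutually independent and uniform, independently of `Ψ`. -/
theorem parallel_bell_measurement_prob {α : Type*} [Fintype α] (k : ℕ)
    (Ψ : α × (Fin k → Fin 2) → ℂ) (m : Fin k → Fin 2 × Fin 2) :
    ∑ a : α, ∑ w : Fin k → Fin 2,
        ‖parallelTeleported k Ψ (a, fun i => (m i).1, fun i => (m i).2, w)‖ ^ 2
      = ((4 : ℝ) ^ k)⁻¹ * ∑ a : α, ∑ c : Fin k → Fin 2, ‖Ψ (a, c)‖ ^ 2 := by
  simp only [norm_sq_parallelTeleported_apply, ← mul_sum]
  congr 1
  exact sum_congr rfl fun a _ =>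
    Fintype.sum_equiv (Equiv.addRight fun i => (m i).2) _ _ fun _ => rfl
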